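/- Let F ⊂ ℝ^2_{≥0} be a compact convex polygon and 𝔓 its simplicial affine convex polygonal semigroup. Suppose F ∩ τ_1 is a point P_1 and F ∩ τ_2 is a point P_d, and let Q be the intersection of the lines ν_1 and ν_2 (the lines along which consecutive dilated boundary sides near τ_1 and τ_2 intersect). Then the sets Υ \ 𝔓 and Υ \ 𝔓̄ are finite, where Υ = (Q + L_{ℚ≥}(F)) ∩ ℕ^2. -/

import Mathlib

open Set
open scoped Pointwise

/-- Coercion of a lattice point of `ℕ²` into `ℚ²`. -/
def toQ (x : Fin 2 → ℕ) : Fin 2 → ℚ := fun i => (x i : ℚ)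

/-- The rational cone `L_{ℚ≥}(G)` generated by a subset `G ⊆ ℚ²`. -/
def coneQ (G : Set (Fin 2 → ℚ)) : Set (Fin 2 → ℚ) :=
  {x | ∃ (n : ℕ) (q : Fin n → ℚ) (f : Fin n → (Fin 2 → ℚ)),
    (∀ i, 0 ≤ q i) ∧ (∀ i, f i ∈ G) ∧ x = ∑ i, q i • f i}

/-- The ray from the origin through `v ∈ ℚ²`. -/
def rayQ (v : Fin 2 → ℚ) : Set (Fin 2 → ℚ) := {x | ∃ q : ℚ, 0 ≤ q ∧ x = q • v}

/-- The lattice points on the ray from the origin through `v`. -/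
def rayN (v : Fin 2 → ℕ) : Set (Fin 2 → ℕ) := {x | toQ x ∈ rayQ (toQ v)}

/-- Square of the Euclidean norm of a lattice point. -/
def normSq (x : Fin 2 → ℕ) : ℕ := x 0 ^ 2 + x 1 ^ 2

/-- The cone `𝒞 = L_{ℚ≥}(S) ∩ ℕ²` of a subsemigroup `S ⊆ ℕ²`. -/
def coneN (S : Set (Fin 2 → ℕ)) : Set (Fin 2 → ℕ) := {x | toQ x ∈ coneQ (toQ '' S)}

/-- The interior `int(X)` of `X` relative to the extremal rays through `v1, v2`. -/
def interiorOf (X : Set (Fin 2 → ℕ)) (v1 v2 : Fin 2 → ℕ) : Set (Fin 2 → ℕ) :=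
  X \ (rayN v1 ∪ rayN v2)

/-- `S̄ = {a ∈ ℕ² : a + g ∈ S for every generator g ∈ G}`. -/
def sbar (S : Set (Fin 2 → ℕ)) (G : Finset (Fin 2 → ℕ)) : Set (Fin 2 → ℕ) :=
  {a | ∀ g ∈ G, a + g ∈ S}

/-- `n` is the nonzero element of minimal (Euclidean) norm of `T` on the ray `τ`. -/
def IsMinOnRay (T τ : Set (Fin 2 → ℕ)) (n : Fin 2 → ℕ) : Prop :=
  n ∈ T ∩ τ ∧ n ≠ 0 ∧ ∀ m ∈ T ∩ τ, m ≠ 0 → normSq n ≤ normSq m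

/-- The Cohen–Macaulay criterion for a simplicial semigroup `T ⊆ ℕ²` with cone `C`
and extremal rays `τ1, τ2`: for the minimal elements `n1, n2` of `T` on the two rays,
every `a ∈ C \ T` satisfies `a + n1 ∉ T` or `a + n2 ∉ T`. -/
def IsCMsg (T C τ1 τ2 : Set (Fin 2 → ℕ)) : Prop :=
  ∃ n1 n2 : Fin 2 → ℕ, IsMinOnRay T τ1 n1 ∧ IsMinOnRay T τ2 n2 ∧
    ∀ a ∈ C \ T, a + n1 ∉ T ∨ a + n2 ∉ T

/-- `S` is Buchsbaum iff (Rosales) the semigroup `S̄` is Cohen–Macaulay. -/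
def IsBuchsbaumSG (S : Set (Fin 2 → ℕ)) (G : Finset (Fin 2 → ℕ))
    (C τ1 τ2 : Set (Fin 2 → ℕ)) : Prop :=
  IsCMsg (sbar S G) C τ1 τ2

/-- A subsemigroup of `ℕ²` is generated by a single element. -/
def genByOne (T : Set (Fin 2 → ℕ)) : Prop :=
  ∃ n : Fin 2 → ℕ, T = {x | ∃ k : ℕ, x = k • n}

/-- The circle semigroup of the circle (disk) of center `(a,b)` and radius `r`. -/
def circleSG (a b r : ℝ) : Set (Fin 2 → ℕ) :=
  {x | ∃ i : ℕ, ((x 0 : ℝ) - i * a) ^ 2 + ((x 1 : ℝ) - i * b) ^ 2 ≤ (i * r) ^ 2}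

/-- The convex body semigroup `⋃ i, (i·F ∩ ℕ²)` of a convex body `F ⊆ ℚ²`. -/
def polySG (F : Set (Fin 2 → ℚ)) : Set (Fin 2 → ℕ) :=
  {x | ∃ i : ℕ, toQ x ∈ (i : ℚ) • F}

/-- `G` is a minimal generating set of the semigroup `S`. -/
def minimalGenSet (S : Set (Fin 2 → ℕ)) (G : Finset (Fin 2 → ℕ)) : Prop :=
  (AddSubmonoid.closure (G : Set (Fin 2 → ℕ)) : Set (Fin 2 → ℕ)) = S ∧
  ∀ g ∈ G, g ∉ (AddSubmonoid.closure ((G.erase g : Finset (Fin 2 → ℕ)) :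
    Set (Fin 2 → ℕ)) : Set (Fin 2 → ℕ))

/-- `S` is simplicial with extremal rays through `v1` and `v2`. -/
def Simplicial (S : Set (Fin 2 → ℕ)) (v1 v2 : Fin 2 → ℕ) : Prop :=
  v1 ≠ 0 ∧ v2 ≠ 0 ∧ rayN v1 ≠ rayN v2 ∧
  coneQ (toQ '' S) = coneQ {toQ v1, toQ v2}

/-- The intersection `h·[P1,Pt] ∩ (h+1)·[P1,P2]` of consecutive dilated sides. -/
def crossSet (P1 Pt P2 : Fin 2 → ℚ) (h : ℕ) : Set (Fin 2 → ℚ) :=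
  segment ℚ ((h : ℚ) • P1) ((h : ℚ) • Pt) ∩
    segment ℚ (((h : ℚ) + 1) • P1) (((h : ℚ) + 1) • P2)

/-- The region `ℬ = {D + λ·n : D ∈ [j·P1, V], λ ∈ ℚ_{≥0}} ∩ C`. -/
def stripB (P1 V : Fin 2 → ℚ) (j : ℕ) (n : Fin 2 → ℕ) (C : Set (Fin 2 → ℕ)) :
    Set (Fin 2 → ℕ) :=
  {x | (∃ D ∈ segment ℚ ((j : ℚ) • P1) V, ∃ l : ℚ, 0 ≤ l ∧ toQ x = D + l • toQ n) ∧
    x ∈ C}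

/-- A (affine) line in `ℚ²`. -/
def IsLine (ν : Set (Fin 2 → ℚ)) : Prop :=
  ∃ p d : Fin 2 → ℚ, d ≠ 0 ∧ ν = {y | ∃ s : ℚ, y = p + s • d}

/-- The corner region `Υ_i = ConvexHull({O, j·P1, V, ν ∩ τ}) ∩ ℕ²`. -/
def Ups (j : ℕ) (P1 V W : Fin 2 → ℚ) : Set (Fin 2 → ℕ) :=
  {x | toQ x ∈ convexHull ℚ {0, (j : ℚ) • P1, V, W}}

/-- The translated-cone region `Υ = (Q + L_{ℚ≥}(F)) ∩ ℕ²`. -/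
def UpsMain (Qpt : Fin 2 → ℚ) (F : Set (Fin 2 → ℚ)) : Set (Fin 2 → ℕ) :=
  {x | ∃ y ∈ coneQ F, toQ x = Qpt + y}

/-!
The cone of `F` is spanned by the vertices `P₁ = P i1` and `P_d = P d1` on the two extremal rays,
so a point of `Υ` is `x = Q + a P₁ + b P_d` with `a, b ≥ 0`. The line `ν₁` passes through the
crossing point `V₁ = (j₁+1) w = j₁ w'` (`w, w' ∈ F`) and through `V₁ + P₁`, hence
`Q = V₁ + σ₁ P₁`. When `σ₁ + a ≥ 0`, the point `x = V₁ + (σ₁ + a) P₁ + b P_d` lies in `i F`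
for `i = ⌈σ₁ + a + b + j₁⌉`: the excess `i - (σ₁ + a + b)` lies between `j₁` and `j₁ + 1`, so
`V₁` can absorb it as a convex combination of `(j₁+1) w` and `j₁ w'`. The same holds near `P_d`,
so the lattice points of `Υ \ 𝔓` have `a < -σ₁` and `b < -σ₂` and form a bounded set.
Finally `𝔓 ⊆ 𝔓̄` because `𝔓` is closed under addition.
-/

section Cones

lemma coneQ_subset {G T : Set (Fin 2 → ℚ)} (hGT : G ⊆ T) (h0 : (0 : Fin 2 → ℚ) ∈ T)
    (hadd : ∀ u ∈ T, ∀ v ∈ T, u + v ∈ T) (hsmul : ∀ q : ℚ, 0 ≤ q → ∀ u ∈ T, q • u ∈ T) :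
    coneQ G ⊆ T := by
  rintro x ⟨n, q, f, hq, hf, rfl⟩
  induction n with
  | zero => simpa using h0
  | succ n ih =>
    rw [Fin.sum_univ_succ]
    exact hadd _ (hsmul _ (hq 0) _ (hGT (hf 0))) _
      (ih (fun i => q i.succ) (fun i => f i.succ) (fun i => hq i.succ) (fun i => hf i.succ))

lemma subset_coneQ (G : Set (Fin 2 → ℚ)) : G ⊆ coneQ G :=
  fun g hg => ⟨1, fun _ => 1, fun _ => g, fun _ => zero_le_one, fun _ => hg, by simp⟩

def coneOver (F : Set (Fin 2 → ℚ)) : Set (Fin 2 → ℚ) :=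
  {z | ∃ c : ℚ, 0 ≤ c ∧ ∃ f ∈ F, z = c • f}

lemma coneQ_subset_coneOver {F G : Set (Fin 2 → ℚ)} (hF : Convex ℚ F) (hne : F.Nonempty)
    (hG : G ⊆ coneOver F) : coneQ G ⊆ coneOver F := by
  obtain ⟨f₀, hf₀⟩ := hne
  refine coneQ_subset hG ⟨0, le_rfl, f₀, hf₀, (zero_smul ℚ f₀).symm⟩ ?_ ?_
  · rintro _ ⟨c, hc, f, hf, rfl⟩ _ ⟨c', hc', f', hf', rfl⟩
    rcases (add_nonneg hc hc').eq_or_lt with hsum | hsum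
    · obtain ⟨rfl, rfl⟩ : c = 0 ∧ c' = 0 := ⟨by linarith, by linarith⟩
      exact ⟨0, le_rfl, f₀, hf₀, by simp⟩
    · refine ⟨c + c', hsum.le, (c / (c + c')) • f + (c' / (c + c')) • f',
        hF hf hf' (by positivity) (by positivity) (by field_simp), ?_⟩
      rw [smul_add, smul_smul, smul_smul, mul_div_cancel₀ _ hsum.ne',
        mul_div_cancel₀ _ hsum.ne']
  · rintro q hq _ ⟨c, hc, f, hf, rfl⟩
    exact ⟨q * c, mul_nonneg hq hc, f, hf, smul_smul q c f⟩

lemma exists_eq_smul_of_inter_rayQ {F : Set (Fin 2 → ℚ)} {v p : Fin 2 → ℚ}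
    (hFv : F ∩ rayQ v = {p}) (hv : v ∈ coneOver F) (hv0 : v ≠ 0) :
    ∃ c : ℚ, 0 ≤ c ∧ v = c • p := by
  obtain ⟨c, hc, f, hf, rfl⟩ := hv
  have hc0 : c ≠ 0 := by rintro rfl; simp at hv0
  have hfp : f ∈ F ∩ rayQ (c • f) :=
    ⟨hf, c⁻¹, inv_nonneg.2 hc, by rw [smul_smul, inv_mul_cancel₀ hc0, one_smul]⟩
  rw [hFv, mem_singleton_iff] at hfp
  exact ⟨c, hc, by rw [hfp]⟩

def pairCone (A B : Fin 2 → ℚ) : Set (Fin 2 → ℚ) :=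
  {z | ∃ a b : ℚ, 0 ≤ a ∧ 0 ≤ b ∧ z = a • A + b • B}

variable {A B : Fin 2 → ℚ}

lemma zero_mem_pairCone : (0 : Fin 2 → ℚ) ∈ pairCone A B :=
  ⟨0, 0, le_rfl, le_rfl, by simp⟩

lemma add_mem_pairCone {u v : Fin 2 → ℚ} (hu : u ∈ pairCone A B) (hv : v ∈ pairCone A B) :
    u + v ∈ pairCone A B := by
  obtain ⟨a, b, ha, hb, rfl⟩ := hu
  obtain ⟨a', b', ha', hb', rfl⟩ := hv
  exact ⟨a + a', b + b', add_nonneg ha ha', add_nonneg hb hb', by module⟩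

lemma smul_mem_pairCone {q : ℚ} (hq : 0 ≤ q) {u : Fin 2 → ℚ} (hu : u ∈ pairCone A B) :
    q • u ∈ pairCone A B := by
  obtain ⟨a, b, ha, hb, rfl⟩ := hu
  exact ⟨q * a, q * b, mul_nonneg hq ha, mul_nonneg hq hb, by module⟩

lemma convex_pairCone : Convex ℚ (pairCone A B) :=
  fun _ hu _ hv _ _ hs ht _ => add_mem_pairCone (smul_mem_pairCone hs hu) (smul_mem_pairCone ht hv)

lemma coneQ_subset_pairCone {G : Set (Fin 2 → ℚ)} (hG : G ⊆ pairCone A B) :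
    coneQ G ⊆ pairCone A B :=
  coneQ_subset hG zero_mem_pairCone (fun _ hu _ hv => add_mem_pairCone hu hv)
    (fun _ hq _ hu => smul_mem_pairCone hq hu)

lemma smul_left_mem_pairCone {c : ℚ} (hc : 0 ≤ c) : c • A ∈ pairCone A B :=
  ⟨c, 0, hc, le_rfl, by simp⟩

lemma smul_right_mem_pairCone {c : ℚ} (hc : 0 ≤ c) : c • B ∈ pairCone A B :=
  ⟨0, c, le_rfl, hc, by simp⟩

end Cones

lemma toQ_ne_zero {v : Fin 2 → ℕ} (hv : v ≠ 0) : toQ v ≠ 0 := by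
  refine fun h => hv (funext fun k => ?_)
  simpa [toQ] using congrFun h k

lemma exists_toQ_eq_nat_smul {p : Fin 2 → ℚ} (hp : ∀ k, 0 ≤ p k) :
    ∃ N : ℕ, 0 < N ∧ ∃ x : Fin 2 → ℕ, toQ x = (N : ℚ) • p := by
  have hnum : ∀ k, (((p k).num.toNat : ℕ) : ℚ) = p k * (p k).den := fun k => by
    rw [Rat.mul_den_eq_num]
    exact_mod_cast Int.toNat_of_nonneg (Rat.num_nonneg.2 (hp k))
  refine ⟨(p 0).den * (p 1).den, Nat.mul_pos (p 0).pos (p 1).pos,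
    ![(p 0).num.toNat * (p 1).den, (p 1).num.toNat * (p 0).den],
    funext (Fin.forall_fin_two.2 ⟨?_, ?_⟩)⟩ <;>
    simp only [toQ, Matrix.cons_val_zero, Matrix.cons_val_one, Nat.cast_mul, hnum,
      Pi.smul_apply, smul_eq_mul] <;> ring

lemma finite_setOf_toQ_le (c : Fin 2 → ℚ) : {x : Fin 2 → ℕ | toQ x ≤ c}.Finite :=
  (Set.finite_Iic fun k => ⌈c k⌉₊).subset fun _ hx k =>
    Nat.cast_le (α := ℚ) |>.1 ((hx k).trans (Nat.le_ceil _))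

lemma toQ_image_polySG_subset_coneOver (F : Set (Fin 2 → ℚ)) : toQ '' polySG F ⊆ coneOver F := by
  rintro _ ⟨x, ⟨i, f, hf, hfx⟩, rfl⟩
  exact ⟨i, i.cast_nonneg, f, hf, hfx.symm⟩

lemma subset_pairCone_of_coneQ_polySG {F : Set (Fin 2 → ℚ)} {A B : Fin 2 → ℚ} (hF : F ⊆ Ici 0)
    (h : coneQ (toQ '' polySG F) ⊆ pairCone A B) : F ⊆ pairCone A B := by
  intro f hf
  obtain ⟨N, hN, x, hx⟩ := exists_toQ_eq_nat_smul (hF hf)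
  have hxS : x ∈ polySG F := ⟨N, hx ▸ smul_mem_smul_set hf⟩
  have := smul_mem_pairCone (inv_nonneg.2 N.cast_nonneg) (h (subset_coneQ _ ⟨x, hxS, rfl⟩))
  rwa [hx, inv_smul_smul₀ (by positivity)] at this

lemma exists_toQ_eq_smul_of_simplicial {F : Set (Fin 2 → ℚ)} (hF : Convex ℚ F) (hne : F.Nonempty)
    {v1 v2 v : Fin 2 → ℕ} (hsimp : Simplicial (polySG F) v1 v2) (hv : v ∈ ({v1, v2} : Set _))
    {p : Fin 2 → ℚ} (hFv : F ∩ rayQ (toQ v) = {p}) : ∃ c : ℚ, 0 ≤ c ∧ toQ v = c • p := by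
  obtain ⟨hv1, hv2, -, hcone⟩ := hsimp
  refine exists_eq_smul_of_inter_rayQ hFv ?_
    (toQ_ne_zero (by rcases hv with rfl | rfl <;> assumption))
  refine coneQ_subset_coneOver hF hne (toQ_image_polySG_subset_coneOver F) ?_
  rw [hcone, ← image_pair]
  exact subset_coneQ _ (mem_image_of_mem toQ hv)

lemma coneQ_convexHull_subset_pairCone {t : ℕ} {P : Fin t → Fin 2 → ℚ} (hpos : ∀ j i, 0 ≤ P j i)
    {v1 v2 : Fin 2 → ℕ}
    (hcone : coneQ (toQ '' polySG (convexHull ℚ (range P))) = coneQ {toQ v1, toQ v2})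
    {A B : Fin 2 → ℚ} {c1 c2 : ℚ} (hc1 : 0 ≤ c1) (hv1 : toQ v1 = c1 • A) (hc2 : 0 ≤ c2)
    (hv2 : toQ v2 = c2 • B) : coneQ (convexHull ℚ (range P)) ⊆ pairCone A B := by
  refine coneQ_subset_pairCone (subset_pairCone_of_coneQ_polySG
    (convexHull_min (range_subset_iff.2 fun j k => hpos j k) (convex_Ici 0)) ?_)
  rw [hcone]
  refine coneQ_subset_pairCone ?_
  rintro _ (rfl | rfl)
  exacts [hv1 ▸ smul_left_mem_pairCone hc1, hv2 ▸ smul_right_mem_pairCone hc2]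

lemma subset_sbar {S : Set (Fin 2 → ℕ)} {G : Finset (Fin 2 → ℕ)} (hG : minimalGenSet S G) :
    S ⊆ sbar S G := by
  intro x hx g hg
  rw [← hG.1] at hx ⊢
  exact add_mem hx (AddSubmonoid.subset_closure hg)

section Crossings

variable {𝕜 E : Type*} [Field 𝕜] [LinearOrder 𝕜] [IsStrictOrderedRing 𝕜] [AddCommGroup E]
  [Module 𝕜 E]

lemma segment_smul_smul (r : 𝕜) (x y : E) : segment 𝕜 (r • x) (r • y) = r • segment 𝕜 x y := by
  rw [← Set.image_smul]
  exact (image_segment 𝕜 (LinearMap.lsmul 𝕜 E r).toAffineMap x y).symm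

lemma add_smul_mem_segment_smul {r k : 𝕜} (hr : 0 ≤ r) (hk : 0 ≤ k) {x y v : E}
    (hv : v ∈ segment 𝕜 (r • x) (r • y)) : v + k • x ∈ segment 𝕜 ((r + k) • x) ((r + k) • y) := by
  rw [segment_smul_smul] at hv ⊢
  rw [(convex_segment x y).add_smul hr hk]
  exact add_mem_add hv (smul_mem_smul_set (left_mem_segment 𝕜 x y))

end Crossings

lemma add_mem_crossSet_succ {P₁ Pt P₂ V : Fin 2 → ℚ} {j : ℕ} (hV : V ∈ crossSet P₁ Pt P₂ j) :
    V + P₁ ∈ crossSet P₁ Pt P₂ (j + 1) := by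
  rw [← one_smul ℚ P₁]
  refine ⟨?_, ?_⟩
  · simpa using add_smul_mem_segment_smul (Nat.cast_nonneg j) zero_le_one hV.1
  · simpa [add_assoc] using add_smul_mem_segment_smul (by positivity) zero_le_one hV.2

lemma exists_eq_smul_of_mem_segment_smul {F : Set (Fin 2 → ℚ)} (hF : Convex ℚ F)
    {x y v : Fin 2 → ℚ} (hx : x ∈ F) (hy : y ∈ F) {r : ℚ} (hv : v ∈ segment ℚ (r • x) (r • y)) :
    ∃ w ∈ F, v = r • w := by
  rw [segment_smul_smul] at hv
  obtain ⟨w, hw, rfl⟩ := hv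
  exact ⟨w, hF.segment_subset hx hy hw, rfl⟩

lemma exists_mem_nat_smul_of_crossing {F : Set (Fin 2 → ℚ)} (hF : Convex ℚ F)
    {w w' A B V : Fin 2 → ℚ} (hw : w ∈ F) (hw' : w' ∈ F) (hA : A ∈ F) (hB : B ∈ F) {j : ℕ}
    (hV : V = ((j : ℚ) + 1) • w) (hV' : V = (j : ℚ) • w') {a b : ℚ} (ha : 0 ≤ a) (hb : 0 ≤ b) :
    ∃ i : ℕ, V + a • A + b • B ∈ (i : ℚ) • F := by
  set i := ⌈a + b + j⌉₊
  set μ : ℚ := i - (a + b + j)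
  have hμ0 : 0 ≤ μ := sub_nonneg.2 (Nat.le_ceil _)
  have hμ1 : μ ≤ 1 := by
    have := Nat.ceil_lt_add_one (show 0 ≤ a + b + j by positivity); simp only [μ]; linarith
  have hi : (i : ℚ) = μ * (j + 1) + (1 - μ) * j + a + b := by simp only [μ]; ring
  have hVμ : V = (μ * (j + 1)) • w + ((1 - μ) * j) • w' := by
    rw [mul_smul, mul_smul, ← hV, ← hV', ← add_smul]; simp
  refine ⟨i, ?_⟩
  rw [hi, hF.add_smul (by positivity) hb, hF.add_smul (by positivity) ha,
    hF.add_smul (by positivity) (by nlinarith), hVμ]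
  exact add_mem_add (add_mem_add (add_mem_add (smul_mem_smul_set hw) (smul_mem_smul_set hw'))
    (smul_mem_smul_set hA)) (smul_mem_smul_set hB)

lemma mem_polySG_of_mem_crossSet {F : Set (Fin 2 → ℚ)} (hF : Convex ℚ F)
    {P₁ Pt P₂ B V : Fin 2 → ℚ} (h₁ : P₁ ∈ F) (ht : Pt ∈ F) (h₂ : P₂ ∈ F) (hB : B ∈ F) {j : ℕ}
    (hV : V ∈ crossSet P₁ Pt P₂ j) {a b : ℚ} (ha : 0 ≤ a) (hb : 0 ≤ b) {x : Fin 2 → ℕ}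
    (hx : toQ x = V + a • P₁ + b • B) : x ∈ polySG F := by
  obtain ⟨w', hw', hV'⟩ := exists_eq_smul_of_mem_segment_smul hF h₁ ht hV.1
  obtain ⟨w, hw, hVw⟩ := exists_eq_smul_of_mem_segment_smul hF h₁ h₂ hV.2
  show ∃ i : ℕ, toQ x ∈ (i : ℚ) • F
  rw [hx]
  exact exists_mem_nat_smul_of_crossing hF hw hw' h₁ hB hVw hV' ha hb

lemma IsLine.exists_eq_add_smul {ν : Set (Fin 2 → ℚ)} (hν : IsLine ν) {p d q : Fin 2 → ℚ}
    (hp : p ∈ ν) (hpd : p + d ∈ ν) (hd : d ≠ 0) (hq : q ∈ ν) : ∃ s : ℚ, q = p + s • d := by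
  obtain ⟨p₀, e, -, rfl⟩ := hν
  obtain ⟨s₀, hs₀⟩ := hp
  obtain ⟨s₁, hs₁⟩ := hpd
  obtain ⟨s, rfl⟩ := hq
  have hde : d = (s₁ - s₀) • e := by linear_combination (norm := module) hs₁ - hs₀
  have hs : s₁ - s₀ ≠ 0 := fun h => hd (by rw [hde, h, zero_smul])
  refine ⟨(s - s₀) / (s₁ - s₀), ?_⟩
  rw [hs₀, hde, smul_smul, div_mul_cancel₀ _ hs]
  module

lemma exists_eq_add_smul_of_crossSet {ν : Set (Fin 2 → ℚ)} (hν : IsLine ν)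
    {P₁ Pt P₂ V Q : Fin 2 → ℚ} {j : ℕ} (hsub : ∀ h : ℕ, j ≤ h → crossSet P₁ Pt P₂ h ⊆ ν)
    (hV : V ∈ crossSet P₁ Pt P₂ j) (h₁ : P₁ ≠ 0) (hQ : Q ∈ ν) : ∃ σ : ℚ, Q = V + σ • P₁ :=
  hν.exists_eq_add_smul (hsub j le_rfl hV) (hsub (j + 1) j.le_succ (add_mem_crossSet_succ hV)) h₁ hQ

lemma finite_upsMain_diff_polySG {t : ℕ} {P : Fin t → Fin 2 → ℚ} (hpos : ∀ j i, 0 ≤ P j i)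
    {i1 it i2 d1 e1 e2 : Fin t} (hcone : coneQ (convexHull ℚ (range P)) ⊆ pairCone (P i1) (P d1))
    {j1 j2 : ℕ} {V1 V2 Q : Fin 2 → ℚ} (hV1 : V1 ∈ crossSet (P i1) (P it) (P i2) j1)
    (hV2 : V2 ∈ crossSet (P d1) (P e1) (P e2) j2) {σ1 σ2 : ℚ} (hσ1 : Q = V1 + σ1 • P i1)
    (hσ2 : Q = V2 + σ2 • P d1) :
    (UpsMain Q (convexHull ℚ (range P)) \ polySG (convexHull ℚ (range P))).Finite := by
  have hF : Convex ℚ (convexHull ℚ (range P)) := convex_convexHull ℚ _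
  have hPF : ∀ k, P k ∈ convexHull ℚ (range P) := fun k => subset_convexHull ℚ _ ⟨k, rfl⟩
  refine (finite_setOf_toQ_le (Q - σ1 • P i1 - σ2 • P d1)).subset ?_
  rintro x ⟨⟨y, hy, hxy⟩, hxS⟩
  obtain ⟨a, b, ha, hb, rfl⟩ := hcone hy
  have ha' : σ1 + a < 0 := not_le.1 fun h => hxS <| mem_polySG_of_mem_crossSet hF (hPF _)
    (hPF _) (hPF _) (hPF d1) hV1 h hb (by rw [hxy, hσ1]; module)
  have hb' : σ2 + b < 0 := not_le.1 fun h => hxS <| mem_polySG_of_mem_crossSet hF (hPF _)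
    (hPF _) (hPF _) (hPF i1) hV2 h ha (by rw [hxy, hσ2]; module)
  intro k
  have := hpos i1 k
  have := hpos d1 k
  simp only [hxy, Pi.add_apply, Pi.sub_apply, Pi.smul_apply, smul_eq_mul]
  nlinarith

theorem stmt19_general
    (t : ℕ) (P : Fin t → (Fin 2 → ℚ)) (hpos : ∀ j i, 0 ≤ P j i)
    (i1 it i2 d1 e1 e2 : Fin t)
    (S : Set (Fin 2 → ℕ)) (hS : S = polySG (convexHull ℚ (Set.range P)))
    (G : Finset (Fin 2 → ℕ)) (hG : minimalGenSet S G)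
    (v1 v2 : Fin 2 → ℕ) (hsimp : Simplicial S v1 v2)
    (hP1 : convexHull ℚ (Set.range P) ∩ rayQ (toQ v1) = {P i1})
    (hPd : convexHull ℚ (Set.range P) ∩ rayQ (toQ v2) = {P d1})
    (j1 j2 : ℕ)
    (V1 V2 : Fin 2 → ℚ)
    (hV1 : crossSet (P i1) (P it) (P i2) j1 = {V1})
    (hV2 : crossSet (P d1) (P e1) (P e2) j2 = {V2})
    (nu1 nu2 : Set (Fin 2 → ℚ)) (hl1 : IsLine nu1) (hl2 : IsLine nu2)
    (hnu1 : ∀ h : ℕ, j1 ≤ h → crossSet (P i1) (P it) (P i2) h ⊆ nu1)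
    (hnu2 : ∀ h : ℕ, j2 ≤ h → crossSet (P d1) (P e1) (P e2) h ⊆ nu2)
    (Qpt : Fin 2 → ℚ) (hQ : nu1 ∩ nu2 = {Qpt})
    :
    (UpsMain Qpt (convexHull ℚ (Set.range P)) \ S).Finite ∧
      (UpsMain Qpt (convexHull ℚ (Set.range P)) \ sbar S G).Finite := by
  subst hS
  have hne : (convexHull ℚ (range P)).Nonempty := ⟨_, subset_convexHull ℚ _ ⟨i1, rfl⟩⟩
  obtain ⟨c1, hc1, hvc1⟩ :=
    exists_toQ_eq_smul_of_simplicial (convex_convexHull ℚ _) hne hsimp (by simp) hP1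
  obtain ⟨c2, hc2, hvc2⟩ :=
    exists_toQ_eq_smul_of_simplicial (convex_convexHull ℚ _) hne hsimp (by simp) hPd
  have hV1' : V1 ∈ crossSet (P i1) (P it) (P i2) j1 := hV1 ▸ rfl
  have hV2' : V2 ∈ crossSet (P d1) (P e1) (P e2) j2 := hV2 ▸ rfl
  have hQ' : Qpt ∈ nu1 ∩ nu2 := hQ ▸ rfl
  obtain ⟨σ1, hσ1⟩ := exists_eq_add_smul_of_crossSet hl1 hnu1 hV1'
    (right_ne_zero_of_smul (hvc1 ▸ toQ_ne_zero hsimp.1)) hQ'.1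
  obtain ⟨σ2, hσ2⟩ := exists_eq_add_smul_of_crossSet hl2 hnu2 hV2'
    (right_ne_zero_of_smul (hvc2 ▸ toQ_ne_zero hsimp.2.1)) hQ'.2
  have hfin := finite_upsMain_diff_polySG hpos
    (coneQ_convexHull_subset_pairCone hpos hsimp.2.2.2 hc1 hvc1 hc2 hvc2) hV1' hV2' hσ1 hσ2
  exact ⟨hfin, hfin.subset (sdiff_subset_sdiff_right (subset_sbar hG))⟩

/-- If `F` meets each extremal ray in a single vertex and `Q` is
the intersection of the lines `ν_1, ν_2`, then `Υ \ 𝔓` and `Υ \ 𝔓̄` are finite,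
where `Υ = (Q + L_{ℚ≥}(F)) ∩ ℕ²`. -/
theorem stmt19
    (t : ℕ) (P : Fin t → (Fin 2 → ℚ)) (hpos : ∀ j i, 0 ≤ P j i)
    (i1 it i2 d1 e1 e2 : Fin t)
    (S : Set (Fin 2 → ℕ)) (hS : S = polySG (convexHull ℚ (Set.range P)))
    (G : Finset (Fin 2 → ℕ)) (hG : minimalGenSet S G)
    (v1 v2 : Fin 2 → ℕ) (hsimp : Simplicial S v1 v2)
    (hP1 : convexHull ℚ (Set.range P) ∩ rayQ (toQ v1) = {P i1})
    (hPd : convexHull ℚ (Set.range P) ∩ rayQ (toQ v2) = {P d1})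
    (hedge1 : IsExtreme ℚ (convexHull ℚ (Set.range P)) (segment ℚ (P i1) (P it)))
    (hedge2 : IsExtreme ℚ (convexHull ℚ (Set.range P)) (segment ℚ (P i1) (P i2)))
    (hedge3 : IsExtreme ℚ (convexHull ℚ (Set.range P)) (segment ℚ (P d1) (P e1)))
    (hedge4 : IsExtreme ℚ (convexHull ℚ (Set.range P)) (segment ℚ (P d1) (P e2)))
    (j1 j2 : ℕ) (hj1 : 0 < j1) (hj2 : 0 < j2)
    (hj1le : ∀ j' : ℕ, 0 < j' → (crossSet (P i1) (P it) (P i2) j').Nonempty → j1 ≤ j')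
    (hj2le : ∀ j' : ℕ, 0 < j' → (crossSet (P d1) (P e1) (P e2) j').Nonempty → j2 ≤ j')
    (V1 V2 : Fin 2 → ℚ)
    (hV1 : crossSet (P i1) (P it) (P i2) j1 = {V1})
    (hV2 : crossSet (P d1) (P e1) (P e2) j2 = {V2})
    (n1 n2 : Fin 2 → ℕ)
    (hn1 : IsMinOnRay S (rayN v1) n1) (hn2 : IsMinOnRay S (rayN v2) n2)
    (nu1 nu2 : Set (Fin 2 → ℚ)) (hl1 : IsLine nu1) (hl2 : IsLine nu2)
    (hnu1 : ∀ h : ℕ, j1 ≤ h → crossSet (P i1) (P it) (P i2) h ⊆ nu1)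
    (hnu2 : ∀ h : ℕ, j2 ≤ h → crossSet (P d1) (P e1) (P e2) h ⊆ nu2)
    (W1 W2 : Fin 2 → ℚ)
    (hW1 : nu1 ∩ rayQ (toQ v2) = {W1}) (hW2 : nu2 ∩ rayQ (toQ v1) = {W2})
    (Qpt : Fin 2 → ℚ) (hQ : nu1 ∩ nu2 = {Qpt})
    :
    (UpsMain Qpt (convexHull ℚ (Set.range P)) \ S).Finite ∧
      (UpsMain Qpt (convexHull ℚ (Set.range P)) \ sbar S G).Finite :=
  stmt19_general t P hpos i1 it i2 d1 e1 e2 S hS G hG v1 v2 hsimp hP1 hPd j1 j2 V1 V2 hV1 hV2 nu1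
    nu2 hl1 hl2 hnu1 hnu2 Qpt hQ
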